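/- The family of matrices B_{a,b,c}, indexed by the triples (a,b,c) ∈ P, is an F-basis of the Terwilliger F-algebra T (a basis of T as an F-submodule of Matrix X X F), and the cardinality of P equals 2^(2·n₁) · 5^(n₂). -/

import Mathlib

open Matrix Finset
open scoped Classical

set_option synthInstance.maxHeartbeats 1000000
set_option maxHeartbeats 2000000

noncomputable section

variable {n : ℕ}

/-- The disagreement set of two tuples. -/
def dis {U : Fin n → Type} [∀ i, DecidableEq (U i)] (x y : ∀ i, U i) : Finset (Fin n) :=
  Finset.univ.filter fun i => x i ≠ y i

/-- `S° = {i ∈ S | 2 < |U i|}`. -/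
def circ (U : Fin n → Type) [∀ i, Fintype (U i)] (S : Finset (Fin n)) : Finset (Fin n) :=
  S.filter fun i => 2 < Fintype.card (U i)

/-- The valency `k_S`. -/
def val (U : Fin n → Type) [∀ i, Fintype (U i)] (S : Finset (Fin n)) : ℕ :=
  ∏ i ∈ S, (Fintype.card (U i) - 1)

variable (U : Fin n → Type) [∀ i, Fintype (U i)] [∀ i, DecidableEq (U i)]
variable (F : Type) [Field F]

/-- The adjacency matrix `A_S`. -/
def Amat (S : Finset (Fin n)) : Matrix (∀ i, U i) (∀ i, U i) F :=
  Matrix.of fun x y => if dis x y = S then 1 else 0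

/-- The dual idempotent `E_S^*(x₀)`. -/
def Emat (x₀ : ∀ i, U i) (S : Finset (Fin n)) : Matrix (∀ i, U i) (∀ i, U i) F :=
  Matrix.diagonal fun y => if dis x₀ y = S then 1 else 0

/-- The Terwilliger `F`-algebra of the factorial scheme with respect to the base point `x₀`:
the subalgebra of `Matrix X X F` generated by the adjacency matrices and dual idempotents. -/
def Tw (x₀ : ∀ i, U i) : Subalgebra F (Matrix (∀ i, U i) (∀ i, U i) F) :=
  Algebra.adjoin F ({M | ∃ S, M = Amat U F S} ∪ {M | ∃ S, M = Emat U F x₀ S})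

/-- `B_{g,h,i} = ∑_{g △ i ⊆ j ⊆ h} E_g A_j E_i`. -/
def Bmat (x₀ : ∀ i, U i) (g h i : Finset (Fin n)) : Matrix (∀ i, U i) (∀ i, U i) F :=
  ∑ j ∈ Finset.univ.filter (fun j => symmDiff g i ⊆ j ∧ j ⊆ h),
    Emat U F x₀ g * Amat U F j * Emat U F x₀ i

/-- The index set `P` of triples `(a,b,c)` with `a △ c ⊆ b ⊆ (a △ c) ∪ (a ∩ c)°`. -/
def Pset : Finset (Finset (Fin n) × Finset (Fin n) × Finset (Fin n)) :=
  Finset.univ.filter fun t =>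
    symmDiff t.1 t.2.2 ⊆ t.2.1 ∧ t.2.1 ⊆ symmDiff t.1 t.2.2 ∪ circ U (t.1 ∩ t.2.2)

/-- `n₁ = |{i | card (U i) = 2}|`. -/
def nOne : ℕ := (Finset.univ.filter fun i : Fin n => Fintype.card (U i) = 2).card

/-- `n₂ = |{i | 2 < card (U i)}|`. -/
def nTwo : ℕ := (Finset.univ.filter fun i : Fin n => 2 < Fintype.card (U i)).card

/-! For `t = (g, j, i)`, the product `E_g A_j E_i` is the 0/1 matrix `M_t` of the pairs `(x, y)`
with `(D(x₀,x), D(x,y), D(x₀,y)) = t`. These matrices have disjoint supports, and `M_t ≠ 0`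
exactly when `t ∈ P`: coordinatewise, `P` lists the equality patterns that a triple
`(x₀ k, x k, y k)` can have, which also gives `|P| = 4^n₁ 5^n₂`.

Two pairs with the same triple are conjugate under a permutation of `X` that fixes `x₀` and
preserves `D`; such permutations commute with every `A_S` and `E_S`, so `T` lies in their
centralizer, whose elements are constant on triple classes. Hence `T = span {M_t | t ∈ P}`.
Finally `B_{g,h,i} = ∑_{g △ i ⊆ j ⊆ h} M_{g,j,i}` is unitriangular in the `M_t` with respect to
inclusion of the middle index, so the `B_t` span the same `|P|`-dimensional space. -/

open Equiv

theorem Equiv.Perm.exists_apply_eq_of_eq_iff_eq {ι β : Type*} [Finite ι] {f g : ι → β}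
    (h : ∀ i j, f i = f j ↔ g i = g j) : ∃ σ : Perm β, ∀ i, σ (f i) = g i := by
  have : Finite (Set.range f) := (Set.finite_range f).to_subtype
  let g' : Set.range f → β := fun b => g b.2.choose
  have hg' : ∀ i, g' ⟨f i, i, rfl⟩ = g i := fun i =>
    (h _ _).mp (⟨f i, i, rfl⟩ : Set.range f).2.choose_spec
  obtain ⟨σ, hσ⟩ := Perm.exists_extending_pair Subtype.val g' Subtype.val_injective (by
    rintro ⟨_, i, rfl⟩ ⟨_, j, rfl⟩ hij
    rw [hg', hg'] at hij
    exact Subtype.ext ((h i j).mpr hij))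
  exact ⟨σ, fun i => (hσ ⟨f i, i, rfl⟩).trans (hg' i)⟩

theorem Matrix.permMatrix_mul_eq_mul_permMatrix_iff {ι R : Type*} [Fintype ι] [DecidableEq ι]
    [NonAssocSemiring R] (σ : Perm ι) (M : Matrix ι ι R) :
    σ.permMatrix R * M = M * σ.permMatrix R ↔ ∀ x y, M (σ x) (σ y) = M x y := by
  rw [PEquiv.toMatrix_toPEquiv_mul, PEquiv.mul_toMatrix_toPEquiv, ← Matrix.ext_iff]
  simp only [submatrix_apply, id]
  exact ⟨fun h x y => by simpa using h x (σ y), fun h x y => by simpa using h x (σ.symm y)⟩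

theorem Matrix.mem_centralizer_permMatrix_iff {ι R : Type*} [Fintype ι] [DecidableEq ι]
    [CommSemiring R] (S : Set (Perm ι)) (M : Matrix ι ι R) :
    M ∈ Subalgebra.centralizer R ((·.permMatrix R) '' S) ↔
      ∀ σ ∈ S, ∀ x y, M (σ x) (σ y) = M x y := by
  simp [Subalgebra.mem_centralizer_iff, permMatrix_mul_eq_mul_permMatrix_iff]

theorem LinearIndependent.of_span_range_eq {ι K V : Type*} [Fintype ι] [DivisionRing K]
    [AddCommGroup V] [Module K V] {v w : ι → V} (hv : LinearIndependent K v)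
    (h : Submodule.span K (Set.range w) = Submodule.span K (Set.range v)) :
    LinearIndependent K w := by
  rw [linearIndependent_iff_card_eq_finrank_span, Set.finrank, h, finrank_span_eq_card hv]

-- `p = (k ∈ a, k ∈ b, k ∈ c)` and `m = |U k|`: the condition `a △ c ⊆ b ⊆ (a △ c) ∪ (a ∩ c)°`
-- of `Pset` at a single coordinate `k`.
def localPattern (m : ℕ) : Finset (Bool × Bool × Bool) :=
  univ.filter fun p => (p.1 ≠ p.2.2 → p.2.1) ∧ (p.2.1 → p.1 ≠ p.2.2 ∨ (p.1 ∧ p.2.2 ∧ 2 < m))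

theorem mem_localPattern_iff {m : ℕ} {p : Bool × Bool × Bool} :
    p ∈ localPattern m ↔ p = (false, false, false) ∨ p = (false, true, true) ∨
      p = (true, true, false) ∨ p = (true, false, true) ∨ (p = (true, true, true) ∧ 2 < m) := by
  obtain ⟨_ | _, _ | _, _ | _⟩ := p <;> simp [localPattern]

theorem card_localPattern (m : ℕ) : (localPattern m).card = if 2 < m then 5 else 4 := by
  unfold localPattern
  split_ifs with h <;> simp only [h] <;> decide

def coordPattern {α : Type*} [DecidableEq α] (a u v : α) : Bool × Bool × Bool :=
  (decide (a ≠ u), decide (u ≠ v), decide (a ≠ v))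

theorem coordPattern_mem_localPattern {α : Type*} [Fintype α] [DecidableEq α] (a u v : α) :
    coordPattern a u v ∈ localPattern (Fintype.card α) := by
  have h3 : a ≠ u → a ≠ v → u ≠ v → 2 < Fintype.card α := fun hu hv huv =>
    Fintype.two_lt_card_iff.mpr ⟨a, u, v, hu, hv, huv⟩
  rw [mem_localPattern_iff]
  by_cases hu : a = u <;> by_cases hv : a = v <;> by_cases huv : u = v <;>
    simp_all [coordPattern]

theorem exists_coordPattern_eq {α : Type*} [Fintype α] [DecidableEq α]
    (h : 2 ≤ Fintype.card α) (a : α) {p : Bool × Bool × Bool}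
    (hp : p ∈ localPattern (Fintype.card α)) : ∃ u v, coordPattern a u v = p := by
  have hcard : (univ.erase a).card = Fintype.card α - 1 := by
    rw [card_erase_of_mem (mem_univ a), card_univ]
  obtain ⟨b, hb⟩ : (univ.erase a).Nonempty := by
    rw [← card_pos]; omega
  rw [mem_erase] at hb
  rcases mem_localPattern_iff.mp hp with rfl | rfl | rfl | rfl | ⟨rfl, h3⟩
  · exact ⟨a, a, by simp [coordPattern]⟩
  · exact ⟨a, b, by simp [coordPattern, hb.1.symm]⟩
  · exact ⟨b, a, by simp [coordPattern, hb.1.symm, hb.1]⟩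
  · exact ⟨b, b, by simp [coordPattern, hb.1.symm]⟩
  · obtain ⟨u, v, hu, hv, huv⟩ := one_lt_card_iff.mp (show 1 < (univ.erase a).card by omega)
    rw [mem_erase] at hu hv
    exact ⟨u, v, by simp [coordPattern, hu.1.symm, hv.1.symm, huv]⟩

def memPattern (t : Finset (Fin n) × Finset (Fin n) × Finset (Fin n)) (k : Fin n) :
    Bool × Bool × Bool :=
  (decide (k ∈ t.1), decide (k ∈ t.2.1), decide (k ∈ t.2.2))

theorem memPattern_injective : Function.Injective (memPattern (n := n)) := by
  intro t t' h
  simp only [funext_iff, memPattern, Prod.ext_iff, decide_eq_decide] at h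
  ext k <;> simp [h k]

theorem mem_Pset_iff {U : Fin n → Type} [∀ i, Fintype (U i)]
    (t : Finset (Fin n) × Finset (Fin n) × Finset (Fin n)) :
    t ∈ Pset U ↔ ∀ k, memPattern t k ∈ localPattern (Fintype.card (U k)) := by
  simp only [Pset, localPattern, memPattern, mem_filter, mem_univ, true_and, subset_iff,
    mem_symmDiff, mem_union, circ, mem_inter, ne_eq, decide_eq_decide, decide_eq_true_eq]
  constructor
  · rintro ⟨h1, h2⟩ k
    have := @h1 k
    have := @h2 k
    tauto
  · intro h
    constructor <;> intro k <;> have := h k <;> tauto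

theorem mem_Pset_of_subset {U : Fin n → Type} [∀ i, Fintype (U i)] {g h i j : Finset (Fin n)}
    (ht : (g, h, i) ∈ Pset U) (hgi : symmDiff g i ⊆ j) (hjh : j ⊆ h) : (g, j, i) ∈ Pset U := by
  simp only [Pset, mem_filter, mem_univ, true_and] at ht ⊢
  exact ⟨hgi, hjh.trans ht.2⟩

theorem card_Pset (U : Fin n → Type) [∀ i, Fintype (U i)] (hU : ∀ i, 2 ≤ Fintype.card (U i)) :
    (Pset U).card = 2 ^ (2 * nOne U) * 5 ^ nTwo U := by
  have hbij : (Pset U).card =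
      (Fintype.piFinset fun k => localPattern (Fintype.card (U k))).card := by
    refine card_nbij' memPattern
      (fun f => (univ.filter fun k => (f k).1, univ.filter fun k => (f k).2.1,
        univ.filter fun k => (f k).2.2)) ?_ ?_ ?_ ?_
    · intro t ht
      simpa using (mem_Pset_iff t).mp ht
    · intro f hf
      refine (mem_Pset_iff _).mpr fun k => ?_
      simpa [memPattern] using Fintype.mem_piFinset.mp hf k
    · intro t _
      ext k <;> simp [memPattern]
    · intro f _
      funext k
      simp [memPattern]
  have hsmall : (univ.filter fun k : Fin n => ¬2 < Fintype.card (U k)) =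
      univ.filter fun k => Fintype.card (U k) = 2 := by
    ext k
    have := hU k
    simp only [mem_filter, mem_univ, true_and]
    omega
  rw [hbij, Fintype.card_piFinset]
  simp only [card_localPattern]
  rw [prod_ite, prod_const, prod_const, hsmall, pow_mul, mul_comm]
  rfl

section Triples

variable {U : Fin n → Type} [∀ i, DecidableEq (U i)]

theorem mem_dis {x y : ∀ i, U i} {k : Fin n} : k ∈ dis x y ↔ x k ≠ y k := by
  simp [dis]

def disTriple (x₀ x y : ∀ i, U i) : Finset (Fin n) × Finset (Fin n) × Finset (Fin n) :=
  (dis x₀ x, dis x y, dis x₀ y)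

theorem memPattern_disTriple (x₀ x y : ∀ i, U i) (k : Fin n) :
    memPattern (disTriple x₀ x y) k = coordPattern (x₀ k) (x k) (y k) := by
  simp [memPattern, disTriple, coordPattern, mem_dis]

variable [∀ i, Fintype (U i)]

theorem disTriple_mem_Pset (x₀ x y : ∀ i, U i) : disTriple x₀ x y ∈ Pset U :=
  (mem_Pset_iff _).mpr fun k =>
    memPattern_disTriple x₀ x y k ▸ coordPattern_mem_localPattern (x₀ k) (x k) (y k)

theorem exists_disTriple_eq (hU : ∀ i, 2 ≤ Fintype.card (U i)) (x₀ : ∀ i, U i)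
    {t : Finset (Fin n) × Finset (Fin n) × Finset (Fin n)} (ht : t ∈ Pset U) :
    ∃ x y, disTriple x₀ x y = t := by
  choose x y hxy using fun k => exists_coordPattern_eq (hU k) (x₀ k) ((mem_Pset_iff t).mp ht k)
  exact ⟨x, y, memPattern_injective <| funext fun k =>
    (memPattern_disTriple x₀ x y k).trans (hxy k)⟩

end Triples

section Automorphisms

variable {U : Fin n → Type} [∀ i, DecidableEq (U i)]

def autStab (x₀ : ∀ i, U i) : Set (Perm (∀ i, U i)) :=
  {π | π x₀ = x₀ ∧ ∀ x y, dis (π x) (π y) = dis x y}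

theorem dis_piCongrRight (σ : ∀ k, Perm (U k)) (x y : ∀ k, U k) :
    dis (piCongrRight σ x) (piCongrRight σ y) = dis x y := by
  ext k
  simp [mem_dis, (σ k).injective.ne_iff]

theorem exists_mem_autStab_of_disTriple_eq {x₀ x y x' y' : ∀ i, U i}
    (h : disTriple x₀ x y = disTriple x₀ x' y') :
    ∃ π ∈ autStab x₀, π x = x' ∧ π y = y' := by
  have hpat : ∀ k, coordPattern (x₀ k) (x k) (y k) = coordPattern (x₀ k) (x' k) (y' k) :=
    fun k => by rw [← memPattern_disTriple, ← memPattern_disTriple, h]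
  choose σ hσ using fun k => Perm.exists_apply_eq_of_eq_iff_eq
    (f := ![x₀ k, x k, y k]) (g := ![x₀ k, x' k, y' k]) (by
      have := hpat k
      simp only [coordPattern, Prod.ext_iff, decide_eq_decide, ne_eq, not_iff_not] at this
      intro i j
      fin_cases i <;> fin_cases j <;> simp [this.1, this.2.1, this.2.2, eq_comm])
  exact ⟨piCongrRight σ, ⟨funext fun k => hσ k 0, dis_piCongrRight σ⟩,
    funext fun k => hσ k 1, funext fun k => hσ k 2⟩

end Automorphisms

def disTripleMat (x₀ : ∀ i, U i) (t : Finset (Fin n) × Finset (Fin n) × Finset (Fin n)) :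
    Matrix (∀ i, U i) (∀ i, U i) F :=
  Matrix.of fun x y => if disTriple x₀ x y = t then 1 else 0

theorem Emat_mul_Amat_mul_Emat (x₀ : ∀ i, U i) (g j i : Finset (Fin n)) :
    Emat U F x₀ g * Amat U F j * Emat U F x₀ i = disTripleMat U F x₀ (g, j, i) := by
  ext x y
  simp only [Emat, Amat, disTripleMat, disTriple, diagonal_mul, mul_diagonal, of_apply,
    Prod.mk.injEq, mul_ite, mul_one, mul_zero, ite_and]
  split_ifs <;> simp_all

theorem Tw_le_centralizer (x₀ : ∀ i, U i) :
    Tw U F x₀ ≤ Subalgebra.centralizer F ((·.permMatrix F) '' autStab x₀) := by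
  refine Algebra.adjoin_le ?_
  rintro M (⟨S, rfl⟩ | ⟨S, rfl⟩) <;> rw [SetLike.mem_coe, mem_centralizer_permMatrix_iff] <;>
    rintro π ⟨hx₀, hdis⟩ x y
  · simp [Amat, hdis]
  · have h : dis x₀ (π x) = dis x₀ x := by simpa [hx₀] using hdis x₀ x
    simp [Emat, diagonal_apply, π.injective.eq_iff, h]

theorem centralizer_le_span (x₀ : ∀ i, U i) :
    Subalgebra.toSubmodule (Subalgebra.centralizer F ((·.permMatrix F) '' autStab x₀)) ≤
      Submodule.span F (Set.range fun t : Pset U => disTripleMat U F x₀ t) := by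
  intro N hN
  rw [Subalgebra.mem_toSubmodule, mem_centralizer_permMatrix_iff] at hN
  have hconst : ∀ x y x' y', disTriple x₀ x y = disTriple x₀ x' y' → N x' y' = N x y := by
    intro x y x' y' h
    obtain ⟨π, hπ, rfl, rfl⟩ := exists_mem_autStab_of_disTriple_eq h
    exact hN π hπ x y
  let c : Pset U → F := fun t =>
    if h : ∃ p : (∀ i, U i) × (∀ i, U i), disTriple x₀ p.1 p.2 = t then
      N h.choose.1 h.choose.2 else 0
  have hN_eq : N = ∑ t, c t • disTripleMat U F x₀ t := by
    ext x y
    simp only [Matrix.sum_apply, Matrix.smul_apply, disTripleMat, of_apply, smul_eq_mul, mul_ite,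
      mul_one, mul_zero]
    rw [Fintype.sum_eq_single ⟨_, disTriple_mem_Pset x₀ x y⟩
      fun t ht => if_neg fun h => ht (Subtype.ext h.symm), if_pos rfl]
    have hex : ∃ p : (∀ i, U i) × (∀ i, U i), disTriple x₀ p.1 p.2 = disTriple x₀ x y :=
      ⟨(x, y), rfl⟩
    simp only [c, dif_pos hex]
    exact hconst _ _ _ _ hex.choose_spec
  rw [hN_eq]
  exact Submodule.sum_mem _ fun t _ => Submodule.smul_mem _ _ (Submodule.subset_span ⟨t, rfl⟩)

theorem span_le_Tw (x₀ : ∀ i, U i) :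
    Submodule.span F (Set.range fun t : Pset U => disTripleMat U F x₀ t) ≤
      Subalgebra.toSubmodule (Tw U F x₀) := by
  rw [Submodule.span_le]
  rintro _ ⟨⟨⟨g, j, i⟩, _⟩, rfl⟩
  change disTripleMat U F x₀ (g, j, i) ∈ Tw U F x₀
  rw [← Emat_mul_Amat_mul_Emat]
  exact mul_mem (mul_mem (Algebra.subset_adjoin (Or.inr ⟨g, rfl⟩))
    (Algebra.subset_adjoin (Or.inl ⟨j, rfl⟩))) (Algebra.subset_adjoin (Or.inr ⟨i, rfl⟩))

theorem toSubmodule_Tw_eq_span (x₀ : ∀ i, U i) :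
    Subalgebra.toSubmodule (Tw U F x₀) =
      Submodule.span F (Set.range fun t : Pset U => disTripleMat U F x₀ t) :=
  le_antisymm ((Subalgebra.toSubmodule.monotone (Tw_le_centralizer U F x₀)).trans
    (centralizer_le_span U F x₀)) (span_le_Tw U F x₀)

theorem linearIndependent_disTripleMat (hU : ∀ i, 2 ≤ Fintype.card (U i)) (x₀ : ∀ i, U i) :
    LinearIndependent F fun t : Pset U => disTripleMat U F x₀ t := by
  rw [Fintype.linearIndependent_iff]
  intro c hc t
  obtain ⟨x, y, hxy⟩ := exists_disTriple_eq hU x₀ t.2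
  have hxy_entry := congrFun₂ hc x y
  simp only [Matrix.sum_apply, Matrix.smul_apply, disTripleMat, of_apply, smul_eq_mul, mul_ite,
    mul_one, mul_zero, Matrix.zero_apply] at hxy_entry
  rwa [Fintype.sum_eq_single t fun t' ht' => if_neg fun h => ht' (Subtype.ext (h.symm.trans hxy)),
    if_pos hxy] at hxy_entry

theorem Bmat_eq_sum (x₀ : ∀ i, U i) (g h i : Finset (Fin n)) :
    Bmat U F x₀ g h i =
      ∑ j ∈ univ.filter (fun j => symmDiff g i ⊆ j ∧ j ⊆ h), disTripleMat U F x₀ (g, j, i) :=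
  sum_congr rfl fun j _ => Emat_mul_Amat_mul_Emat U F x₀ g j i

theorem disTripleMat_mem_span_Bmat (x₀ : ∀ i, U i) (h : Finset (Fin n)) :
    ∀ g i, (g, h, i) ∈ Pset U → disTripleMat U F x₀ (g, h, i) ∈
      Submodule.span F (Set.range fun t : Pset U => Bmat U F x₀ t.1.1 t.1.2.1 t.1.2.2) := by
  induction h using Finset.strongInduction with
  | H h ih =>
    intro g i ht
    have hh : h ∈ univ.filter (fun j => symmDiff g i ⊆ j ∧ j ⊆ h) := by
      simp only [Pset, mem_filter, mem_univ, true_and] at ht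
      simp [ht.1]
    have hsplit : disTripleMat U F x₀ (g, h, i) = Bmat U F x₀ g h i -
        ∑ j ∈ (univ.filter (fun j => symmDiff g i ⊆ j ∧ j ⊆ h)).erase h,
          disTripleMat U F x₀ (g, j, i) := by
      rw [Bmat_eq_sum, ← add_sum_erase _ _ hh, add_sub_cancel_right]
    rw [hsplit]
    refine Submodule.sub_mem _ (Submodule.subset_span ⟨⟨(g, h, i), ht⟩, rfl⟩)
      (Submodule.sum_mem _ fun j hj => ?_)
    simp only [mem_erase, mem_filter, mem_univ, true_and] at hj
    exact ih j (ssubset_of_subset_of_ne hj.2.2 hj.1) g i (mem_Pset_of_subset ht hj.2.1 hj.2.2)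

theorem span_Bmat_eq_span_disTripleMat (x₀ : ∀ i, U i) :
    Submodule.span F (Set.range fun t : Pset U => Bmat U F x₀ t.1.1 t.1.2.1 t.1.2.2) =
      Submodule.span F (Set.range fun t : Pset U => disTripleMat U F x₀ t) := by
  apply le_antisymm <;> rw [Submodule.span_le] <;> rintro _ ⟨⟨⟨g, h, i⟩, ht⟩, rfl⟩
  · change Bmat U F x₀ g h i ∈ _
    rw [Bmat_eq_sum]
    refine Submodule.sum_mem _ fun j hj => Submodule.subset_span ⟨⟨(g, j, i), ?_⟩, rfl⟩
    simp only [mem_filter, mem_univ, true_and] at hj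
    exact mem_Pset_of_subset ht hj.1 hj.2
  · exact disTripleMat_mem_span_Bmat U F x₀ h g i ht

theorem stmt3 (hU : ∀ i, 2 ≤ Fintype.card (U i)) (x₀ : ∀ i, U i) :
    (∃ b : Module.Basis {t : Finset (Fin n) × Finset (Fin n) × Finset (Fin n) // t ∈ Pset U} F
        (Tw U F x₀),
      ∀ t, ((b t : Tw U F x₀) : Matrix (∀ i, U i) (∀ i, U i) F) =
        Bmat U F x₀ t.1.1 t.1.2.1 t.1.2.2) ∧
    (Pset U).card = 2 ^ (2 * nOne U) * 5 ^ (nTwo U) := by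
  refine ⟨?_, card_Pset U hU⟩
  have hspan := span_Bmat_eq_span_disTripleMat U F x₀
  have hB := (linearIndependent_disTripleMat U F hU x₀).of_span_range_eq hspan
  have hT := hspan.trans (toSubmodule_Tw_eq_span U F x₀).symm
  exact ⟨(Module.Basis.span hB).map (LinearEquiv.ofEq _ _ hT), fun t => by
    rw [Module.Basis.map_apply, Module.Basis.span_apply]; rfl⟩

end
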